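/- Let G = ℤ/Nℤ with N ≥ 2Q², and let χ: ℤ → ℂ have Fourier complexity at most M. Let Q be a positive integer and let 𝒬 be a collection of residue classes modulo Q such that for every divisor q of Q with q > 1 and every a coprime to q, |Σ_{c₀ ∈ 𝒬} e(ac₀/q)| = O(η|𝒬|) for some η > 0. Then (Q/|𝒬|)·Σ_{c₀ ∈ 𝒬} Σ_{N ≤ n < 2N, n ≡ c₀ (mod Q)} χ(t − n) ≥ Σ_{N ≤ n < 2N} χ(t − n) + O(ηM²N + QM²N^{1/2}), for any integer t. -/

import Mathlib

open Finset

/-- `e x = exp(2πix)`. -/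
noncomputable def e (x : ℝ) : ℂ := Complex.exp (2 * Real.pi * Complex.I * (x : ℂ))

lemma e_add (x y : ℝ) : e (x + y) = e x * e y := by
  simp only [e, Complex.ofReal_add, mul_add, Complex.exp_add]

lemma e_zero : e 0 = 1 := by simp [e]

lemma e_int (n : ℤ) : e n = 1 := by
  rw [e, show 2 * (Real.pi : ℂ) * Complex.I * (((n : ℤ) : ℝ) : ℂ)
      = (n : ℂ) * (2 * Real.pi * Complex.I) by push_cast; ring]
  exact Complex.exp_int_mul_two_pi_mul_I n

lemma e_nat_mul (j : ℕ) (x : ℝ) : e ((j : ℝ) * x) = e x ^ j := by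
  induction j with
  | zero => simpa using e_zero
  | succ k ih =>
      have : ((k + 1 : ℕ) : ℝ) * x = (k : ℝ) * x + x := by push_cast; ring
      rw [this, e_add, ih, pow_succ]

lemma e_norm (x : ℝ) : ‖e x‖ = 1 := by
  rw [e, show 2 * (Real.pi : ℂ) * Complex.I * (x : ℂ)
      = ((2 * Real.pi * x : ℝ) : ℂ) * Complex.I by push_cast; ring]
  exact Complex.norm_exp_ofReal_mul_I _

lemma orth (Q : ℕ) (hQ : 1 ≤ Q) (m : ℤ) :
    ∑ j ∈ Finset.range Q, e ((j : ℝ) * ((m : ℝ) / Q)) = if (Q : ℤ) ∣ m then (Q : ℂ) else 0 := by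
  have hQ0 : (Q : ℝ) ≠ 0 := by positivity
  by_cases h : (Q : ℤ) ∣ m
  · rw [if_pos h]
    obtain ⟨k, hk⟩ := h
    have hterm : ∀ j ∈ Finset.range Q, e ((j : ℝ) * ((m : ℝ) / Q)) = 1 := by
      intro j _
      have hmq : (m : ℝ) / Q = ((k : ℤ) : ℝ) := by
        rw [hk]; push_cast; field_simp
      rw [hmq, show (j : ℝ) * ((k : ℤ) : ℝ) = (((j : ℤ) * k : ℤ) : ℝ) by push_cast; ring, e_int]
    rw [Finset.sum_congr rfl hterm]
    simp
  · rw [if_neg h]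
    set z := e ((m : ℝ) / Q) with hz
    have hsum : ∀ j ∈ Finset.range Q, e ((j : ℝ) * ((m : ℝ) / Q)) = z ^ j :=
      fun j _ => e_nat_mul j _
    rw [Finset.sum_congr rfl hsum]
    have hzQ : z ^ Q = 1 := by
      rw [hz, ← e_nat_mul, show (Q : ℝ) * ((m : ℝ) / Q) = ((m : ℤ) : ℝ) by field_simp, e_int]
    have hzne : z ≠ 1 := by
      intro h1
      rw [hz, e, Complex.exp_eq_one_iff] at h1
      obtain ⟨n, hn⟩ := h1
      have h2 : (2 * (Real.pi : ℂ) * Complex.I) ≠ 0 := by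
        simp [Real.pi_ne_zero, Complex.I_ne_zero]
      have h3 : ((((m : ℝ) / Q) : ℝ) : ℂ) = (n : ℂ) := by
        apply mul_left_cancel₀ h2
        rw [hn]; ring
      have h4 : (m : ℝ) / Q = (n : ℝ) := by exact_mod_cast h3
      have h5 : (m : ℝ) = (n : ℝ) * Q := by
        field_simp at h4; linarith
      have h6 : m = n * Q := by exact_mod_cast h5
      exact h ⟨n, by linarith [h6]⟩
    rw [geom_sum_eq hzne, hzQ]
    simp

lemma geom_bound (θ : ℝ) (hθ : e θ ≠ 1) (a b : ℤ) :
    ‖∑ n ∈ Finset.Ico a b, e (θ * (n : ℝ))‖ ≤ 2 / ‖e θ - 1‖ := by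
  have hpos : 0 < ‖e θ - 1‖ := by
    rw [norm_pos_iff, sub_ne_zero]; exact hθ
  rcases le_or_gt b a with hba | hab
  · rw [Finset.Ico_eq_empty (by omega : ¬ a < b)]
    simp
    positivity
  · have hre : ∑ n ∈ Finset.Ico a b, e (θ * (n : ℝ))
        = ∑ k ∈ Finset.range (b - a).toNat, e (θ * ((a + (k : ℤ) : ℤ) : ℝ)) := by
      refine Finset.sum_nbij' (fun n => (n - a).toNat) (fun k => a + (k : ℤ)) ?_ ?_ ?_ ?_ ?_
      · intro n hn
        rw [Finset.mem_Ico] at hn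
        rw [Finset.mem_range]
        omega
      · intro k hk
        rw [Finset.mem_range] at hk
        rw [Finset.mem_Ico]
        omega
      · intro n hn
        rw [Finset.mem_Ico] at hn
        omega
      · intro k hk
        rw [Finset.mem_range] at hk
        omega
      · intro n hn
        rw [Finset.mem_Ico] at hn
        rw [show a + (((n - a).toNat : ℤ)) = n by omega]
    have hterm : ∀ k ∈ Finset.range (b - a).toNat,
        e (θ * ((a + (k : ℤ) : ℤ) : ℝ)) = e (θ * (a : ℝ)) * (e θ) ^ k := by
      intro k _
      rw [show θ * ((a + (k : ℤ) : ℤ) : ℝ) = θ * (a : ℝ) + (k : ℝ) * θ by push_cast; ring,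
        e_add, e_nat_mul]
    rw [hre, Finset.sum_congr rfl hterm, ← Finset.mul_sum, geom_sum_eq hθ]
    rw [norm_mul, e_norm, one_mul, norm_div]
    have h2 : ‖e θ ^ (b - a).toNat - 1‖ ≤ 2 := by
      calc ‖e θ ^ (b - a).toNat - 1‖ ≤ ‖e θ ^ (b - a).toNat‖ + ‖(1 : ℂ)‖ := norm_sub_le _ _
        _ = 2 := by rw [norm_pow, e_norm]; norm_num
    gcongr

lemma norm_e_sub_one (θ : ℝ) : ‖e θ - 1‖ = 2 * |Real.sin (Real.pi * θ)| := by
  set u := Complex.exp (((Real.pi * θ : ℝ) : ℂ) * Complex.I) with hu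
  set v := Complex.exp (-((Real.pi * θ : ℝ) : ℂ) * Complex.I) with hv
  have huv : u * v = 1 := by
    rw [hu, hv, ← Complex.exp_add]
    rw [show ((Real.pi * θ : ℝ) : ℂ) * Complex.I + -((Real.pi * θ : ℝ) : ℂ) * Complex.I = 0 by ring]
    exact Complex.exp_zero
  have hu2 : e θ = u ^ 2 := by
    rw [e, hu, sq, ← Complex.exp_add]
    congr 1
    push_cast
    ring
  have hsin : Complex.sin ((Real.pi * θ : ℝ) : ℂ) = (v - u) * Complex.I / 2 := by
    rw [Complex.sin, hv, hu]
  have hkey : e θ - 1 = u * (2 * Complex.I * Complex.sin ((Real.pi * θ : ℝ) : ℂ)) := by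
    rw [hu2, hsin]
    have hIsq : Complex.I * Complex.I = -1 := Complex.I_mul_I
    linear_combination (u ^ 2 - u * v) * hIsq + huv
  rw [hkey, ← Complex.ofReal_sin]
  simp only [norm_mul, hu, Complex.norm_exp_ofReal_mul_I,
    Complex.norm_I, Complex.norm_two, Complex.norm_real, Real.norm_eq_abs, one_mul, mul_one]

lemma sin_lb (Q : ℕ) (x : ℝ) (h1 : 1 / (Q : ℝ) ≤ x) (h2 : x ≤ 1 - 1 / (Q : ℝ))
    (hQ0 : (0 : ℝ) < Q) : 2 / (Q : ℝ) ≤ Real.sin (Real.pi * x) := by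
  have hx0 : 0 < x := lt_of_lt_of_le (by positivity) h1
  have hpi := Real.pi_pos
  rcases le_or_gt x (1 / 2) with hx | hx
  · have hs := Real.mul_le_sin (x := Real.pi * x) (by positivity) (by nlinarith)
    have h2x : 2 / Real.pi * (Real.pi * x) = 2 * x := by
      field_simp
    rw [h2x] at hs
    calc 2 / (Q : ℝ) = 2 * (1 / Q) := by ring
      _ ≤ 2 * x := by linarith
      _ ≤ Real.sin (Real.pi * x) := hs
  · have hflip : Real.sin (Real.pi * x) = Real.sin (Real.pi * (1 - x)) := by
      rw [show Real.pi * (1 - x) = Real.pi - Real.pi * x by ring, Real.sin_pi_sub]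
    have hy0 : 0 < 1 - x := by
      have : 1 / (Q : ℝ) > 0 := by positivity
      linarith
    have hs := Real.mul_le_sin (x := Real.pi * (1 - x)) (by positivity) (by nlinarith)
    have h2x : 2 / Real.pi * (Real.pi * (1 - x)) = 2 * (1 - x) := by field_simp
    rw [h2x] at hs
    rw [hflip]
    calc 2 / (Q : ℝ) = 2 * (1 / Q) := by ring
      _ ≤ 2 * (1 - x) := by linarith
      _ ≤ Real.sin (Real.pi * (1 - x)) := hs

lemma geo_total (Q N : ℕ) (hQ : 1 ≤ Q) (hN : 2 * Q ^ 2 ≤ N) (γ : ℝ) :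
    ∑ j ∈ Finset.range Q, ‖∑ n ∈ Finset.Ico (N : ℤ) (2 * (N : ℤ)), e ((γ + (j : ℝ) / Q) * (n : ℝ))‖
      ≤ 3 * (N : ℝ) := by
  classical
  have hQ0 : (0 : ℝ) < Q := by positivity
  have hQz : (0 : ℤ) < (Q : ℤ) := by exact_mod_cast hQ
  set c : ℤ := ⌊(Q : ℝ) * γ⌋ with hc
  set δ : ℝ := Int.fract ((Q : ℝ) * γ) with hδ
  have hδ0 : 0 ≤ δ := Int.fract_nonneg _
  have hδ1 : δ < 1 := Int.fract_lt_one _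
  have hcδ : (Q : ℝ) * γ = (c : ℝ) + δ := by
    rw [hc, hδ]; exact (Int.floor_add_fract _).symm
  have htriv : ∀ j : ℕ,
      ‖∑ n ∈ Finset.Ico (N : ℤ) (2 * (N : ℤ)), e ((γ + (j : ℝ) / Q) * (n : ℝ))‖ ≤ (N : ℝ) := by
    intro j
    calc ‖∑ n ∈ Finset.Ico (N : ℤ) (2 * (N : ℤ)), e ((γ + (j : ℝ) / Q) * (n : ℝ))‖
        ≤ ∑ n ∈ Finset.Ico (N : ℤ) (2 * (N : ℤ)), ‖e ((γ + (j : ℝ) / Q) * (n : ℝ))‖ :=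
          norm_sum_le _ _
      _ = ∑ n ∈ Finset.Ico (N : ℤ) (2 * (N : ℤ)), 1 := by
          apply Finset.sum_congr rfl; intros; rw [e_norm]
      _ = ((Finset.Ico (N : ℤ) (2 * (N : ℤ))).card : ℝ) := by
          rw [Finset.sum_const]; simp
      _ = (N : ℝ) := by
          rw [Int.card_Ico]
          norm_num [two_mul]
  set P : ℕ → Prop := fun j => (c + (j : ℤ)) % (Q : ℤ) = 0 ∨ (c + (j : ℤ) + 1) % (Q : ℤ) = 0
    with hP
  have hgood : ∀ j ∈ Finset.range Q, ¬ P j →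
      ‖∑ n ∈ Finset.Ico (N : ℤ) (2 * (N : ℤ)), e ((γ + (j : ℝ) / Q) * (n : ℝ))‖ ≤ (Q : ℝ) / 2 := by
    intro j hj hbad
    simp only [hP] at hbad
    push_neg at hbad
    obtain ⟨hb1, hb2⟩ := hbad
    set r : ℤ := (c + (j : ℤ)) % (Q : ℤ) with hr
    set s : ℤ := (c + (j : ℤ)) / (Q : ℤ) with hs
    have hdiv : (Q : ℤ) * s + r = c + (j : ℤ) := Int.mul_ediv_add_emod _ _
    have hr0 : 0 ≤ r := Int.emod_nonneg _ (ne_of_gt hQz)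
    have hrQ : r < Q := Int.emod_lt_of_pos _ hQz
    have hr1 : 1 ≤ r := by omega
    have hr2 : r ≤ (Q : ℤ) - 2 := by
      by_contra h
      apply hb2
      have hrr : r = (Q : ℤ) - 1 := by omega
      have : c + (j : ℤ) + 1 = (Q : ℤ) * (s + 1) := by rw [← hdiv, hrr]; ring
      rw [this]
      exact Int.mul_emod_right _ _
    have hθ : γ + (j : ℝ) / Q = (s : ℝ) + ((r : ℝ) + δ) / Q := by
      have h2 : (Q : ℝ) * (s : ℝ) + (r : ℝ) = (c : ℝ) + (j : ℝ) := by exact_mod_cast hdiv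
      field_simp
      nlinarith [hcδ, h2]
    set x : ℝ := ((r : ℝ) + δ) / Q with hx
    have hrR1 : (1 : ℝ) ≤ (r : ℝ) := by exact_mod_cast hr1
    have hrR2 : (r : ℝ) ≤ (Q : ℝ) - 2 := by
      have h3 : ((r : ℤ) : ℝ) ≤ (((Q : ℤ) - 2 : ℤ) : ℝ) := by exact_mod_cast hr2
      push_cast at h3
      linarith
    have hx1 : 1 / (Q : ℝ) ≤ x := by
      rw [hx]
      gcongr
      linarith
    have hx2 : x ≤ 1 - 1 / (Q : ℝ) := by
      rw [hx, div_le_iff₀ hQ0]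
      have h4 : (1 - 1 / (Q : ℝ)) * Q = Q - 1 := by field_simp
      rw [h4]
      linarith
    have hsin : 2 / (Q : ℝ) ≤ |Real.sin (Real.pi * (γ + (j : ℝ) / Q))| := by
      rw [hθ, show Real.pi * ((s : ℝ) + x) = Real.pi * x + (s : ℝ) * Real.pi by ring,
        Real.sin_add_int_mul_pi, abs_mul]
      have h5 : |((-1 : ℝ) ^ s)| = 1 := by
        rcases Int.even_or_odd s with hpar | hpar
        · rw [hpar.neg_one_zpow]; norm_num
        · rw [hpar.neg_one_zpow]; norm_num
      rw [h5, one_mul]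
      exact (sin_lb Q x hx1 hx2 hQ0).trans (le_abs_self _)
    have hne : e (γ + (j : ℝ) / Q) ≠ 1 := by
      intro h
      have h0 := norm_e_sub_one (γ + (j : ℝ) / Q)
      rw [h] at h0
      simp only [sub_self, norm_zero] at h0
      have : (0 : ℝ) < 2 / Q := by positivity
      nlinarith
    calc ‖∑ n ∈ Finset.Ico (N : ℤ) (2 * (N : ℤ)), e ((γ + (j : ℝ) / Q) * (n : ℝ))‖
        ≤ 2 / ‖e (γ + (j : ℝ) / Q) - 1‖ := geom_bound _ hne _ _
      _ = 2 / (2 * |Real.sin (Real.pi * (γ + (j : ℝ) / Q))|) := by rw [norm_e_sub_one]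
      _ ≤ 2 / (2 * (2 / Q)) := by
          have hd : (0 : ℝ) < 2 * (2 / Q) := by positivity
          apply div_le_div_of_nonneg_left (by norm_num) hd
          nlinarith [hsin]
      _ = (Q : ℝ) / 2 := by
          field_simp
  have hBsub : (Finset.range Q).filter P ⊆ {((-c) % (Q : ℤ)).toNat, ((-c - 1) % (Q : ℤ)).toNat} := by
    intro j hj
    rw [Finset.mem_filter, Finset.mem_range] at hj
    obtain ⟨hjQ, h⟩ := hj
    have hjQ' : (j : ℤ) < Q := by exact_mod_cast hjQ
    have hjmod : (j : ℤ) % Q = j := Int.emod_eq_of_lt (by positivity) hjQ'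
    rw [Finset.mem_insert, Finset.mem_singleton]
    rcases h with h | h
    · left
      obtain ⟨k, hk⟩ := Int.dvd_of_emod_eq_zero h
      have hcval : -c = (j : ℤ) + (-k) * (Q : ℤ) := by linear_combination -hk
      have hfin : (-c) % (Q : ℤ) = (j : ℤ) := by
        rw [hcval, Int.add_mul_emod_self_right, hjmod]
      omega
    · right
      obtain ⟨k, hk⟩ := Int.dvd_of_emod_eq_zero h
      have hcval : -c - 1 = (j : ℤ) + (-k) * (Q : ℤ) := by linear_combination -hk
      have hfin : (-c - 1) % (Q : ℤ) = (j : ℤ) := by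
        rw [hcval, Int.add_mul_emod_self_right, hjmod]
      omega
  have hBcard : ((Finset.range Q).filter P).card ≤ 2 := by
    refine (Finset.card_le_card hBsub).trans ?_
    refine (Finset.card_insert_le _ _).trans ?_
    simp
  have hsplit := Finset.sum_filter_add_sum_filter_not (Finset.range Q) P
    (fun j => ‖∑ n ∈ Finset.Ico (N : ℤ) (2 * (N : ℤ)), e ((γ + (j : ℝ) / Q) * (n : ℝ))‖)
  have h1 : ∑ j ∈ (Finset.range Q).filter P,
      ‖∑ n ∈ Finset.Ico (N : ℤ) (2 * (N : ℤ)), e ((γ + (j : ℝ) / Q) * (n : ℝ))‖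
      ≤ 2 * (N : ℝ) := by
    calc ∑ j ∈ (Finset.range Q).filter P,
        ‖∑ n ∈ Finset.Ico (N : ℤ) (2 * (N : ℤ)), e ((γ + (j : ℝ) / Q) * (n : ℝ))‖
        ≤ ∑ j ∈ (Finset.range Q).filter P, (N : ℝ) :=
          Finset.sum_le_sum (fun j _ => htriv j)
      _ = ((Finset.range Q).filter P).card * (N : ℝ) := by rw [Finset.sum_const]; simp
      _ ≤ 2 * (N : ℝ) := by
          have : (((Finset.range Q).filter P).card : ℝ) ≤ 2 := by exact_mod_cast hBcard
          have hN0 : (0 : ℝ) ≤ N := by positivity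
          nlinarith
  have h2 : ∑ j ∈ (Finset.range Q).filter (fun j => ¬ P j),
      ‖∑ n ∈ Finset.Ico (N : ℤ) (2 * (N : ℤ)), e ((γ + (j : ℝ) / Q) * (n : ℝ))‖
      ≤ (N : ℝ) := by
    calc ∑ j ∈ (Finset.range Q).filter (fun j => ¬ P j),
        ‖∑ n ∈ Finset.Ico (N : ℤ) (2 * (N : ℤ)), e ((γ + (j : ℝ) / Q) * (n : ℝ))‖
        ≤ ∑ j ∈ (Finset.range Q).filter (fun j => ¬ P j), (Q : ℝ) / 2 := by
          refine Finset.sum_le_sum (fun j hj => ?_)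
          rw [Finset.mem_filter] at hj
          exact hgood j hj.1 hj.2
      _ = ((Finset.range Q).filter (fun j => ¬ P j)).card * ((Q : ℝ) / 2) := by
          rw [Finset.sum_const]; simp
      _ ≤ (Q : ℝ) * ((Q : ℝ) / 2) := by
          have hcard : (((Finset.range Q).filter (fun j => ¬ P j)).card : ℝ) ≤ (Q : ℝ) := by
            have := Finset.card_filter_le (Finset.range Q) (fun j => ¬ P j)
            rw [Finset.card_range] at this
            exact_mod_cast this
          have : (0 : ℝ) ≤ (Q : ℝ) / 2 := by positivity
          nlinarith
      _ ≤ (N : ℝ) := by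
          have hNR : 2 * (Q : ℝ) ^ 2 ≤ (N : ℝ) := by exact_mod_cast hN
          nlinarith
  calc ∑ j ∈ Finset.range Q,
      ‖∑ n ∈ Finset.Ico (N : ℤ) (2 * (N : ℤ)), e ((γ + (j : ℝ) / Q) * (n : ℝ))‖
      = _ + _ := hsplit.symm
    _ ≤ 2 * (N : ℝ) + (N : ℝ) := add_le_add h1 h2
    _ = 3 * (N : ℝ) := by ring

/-- Summing a function of bounded Fourier complexity over residue classes in a set `𝒬`
of residues mod `Q` whose exponential sums to nontrivial divisors of `Q` are
`O(η|𝒬|)`: then `(Q/|𝒬|) ∑_{c₀ ∈ 𝒬} ∑_{N ≤ n < 2N, n ≡ c₀ (Q)} χ(t-n)` is at least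
`∑_{N ≤ n < 2N} χ(t-n)` up to an error `O(ηM²N + QM²N^{1/2})`. -/
theorem stmt_18 : ∃ C : ℝ, 0 < C ∧ ∀ (N Q : ℕ) (t : ℤ) (M : ℕ) (b : Fin M → ℂ)
    (α : Fin M → ℝ) (χ : ℤ → ℝ) (𝒬 : Finset ℕ) (η : ℝ),
    1 ≤ Q → 2 * Q^2 ≤ N → 1 ≤ M → 0 < η →
    (∀ i, ‖b i‖ ≤ M) → (∀ n : ℤ, (χ n : ℂ) = ∑ i, b i * e (α i * n)) →
    𝒬 ⊆ Finset.range Q → 𝒬.Nonempty →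
    (∀ q : ℕ, q ∣ Q → 1 < q → ∀ a : ℤ, Int.gcd a q = 1 →
      ‖∑ c₀ ∈ 𝒬, e ((a : ℝ) * c₀ / q)‖ ≤ η * 𝒬.card) →
    ((Q : ℝ)/𝒬.card) * ∑ c₀ ∈ 𝒬,
        ∑ n ∈ (Finset.Ico (N : ℤ) (2*N)).filter (fun n => n % (Q : ℤ) = (c₀ : ℤ)),
          χ (t - n)
      ≥ (∑ n ∈ Finset.Ico (N : ℤ) (2*N), χ (t - n))
        - C * (η * (M : ℝ)^2 * N + Q * (M : ℝ)^2 * (N : ℝ) ^ ((1:ℝ)/2)) := by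
  refine ⟨3, by norm_num, ?_⟩
  intro N Q t M b α χ 𝒬 η hQ hN hM hη hb hχ hsub hne hexp
  classical
  have hQ0 : (0 : ℝ) < Q := by positivity
  have hQR : (Q : ℝ) ≠ 0 := ne_of_gt hQ0
  have hQC : (Q : ℂ) ≠ 0 := by exact_mod_cast (Nat.pos_of_ne_zero (by omega)).ne'
  have hcard0 : 0 < 𝒬.card := Finset.card_pos.mpr hne
  have hcardR : (0 : ℝ) < 𝒬.card := by exact_mod_cast hcard0
  have hcardC : ((𝒬.card : ℕ) : ℂ) ≠ 0 := by exact_mod_cast hcard0.ne'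
  set S : Finset ℤ := Finset.Ico (N : ℤ) (2 * (N : ℤ)) with hS
  set W : ℕ → ℂ := fun j => ∑ c₀ ∈ 𝒬, e ((j : ℝ) * (-(c₀ : ℝ) / Q)) with hW
  set U : ℕ → ℂ := fun j => ∑ n ∈ S, ((χ (t - n) : ℂ) * e ((j : ℝ) * ((n : ℝ) / Q))) with hU
  -- main identity
  have key : ∀ c₀ ∈ 𝒬,
      (∑ n ∈ S.filter (fun n => n % (Q : ℤ) = (c₀ : ℤ)), (χ (t - n) : ℂ))
        = (1 / (Q : ℂ)) * ∑ j ∈ Finset.range Q, e ((j : ℝ) * (-(c₀ : ℝ) / Q)) * U j := by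
    intro c₀ hc₀
    have hc₀Q : c₀ < Q := Finset.mem_range.mp (hsub hc₀)
    have hc₀mod : (c₀ : ℤ) % (Q : ℤ) = (c₀ : ℤ) :=
      Int.emod_eq_of_lt (by positivity) (by exact_mod_cast hc₀Q)
    have hiff : ∀ n : ℤ, n % (Q : ℤ) = (c₀ : ℤ) ↔ (Q : ℤ) ∣ (n - (c₀ : ℤ)) := by
      intro n
      constructor
      · intro h
        apply Int.dvd_of_emod_eq_zero
        rw [Int.sub_emod, h, hc₀mod]
        simp
      · rintro ⟨k, hk⟩
        have hn : n = (c₀ : ℤ) + (Q : ℤ) * k := by omega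
        rw [hn, Int.add_mul_emod_self_left, hc₀mod]
    rw [Finset.sum_filter]
    have step1 : ∀ n ∈ S, (if n % (Q : ℤ) = (c₀ : ℤ) then ((χ (t - n) : ℂ)) else 0)
        = (1 / (Q : ℂ)) * ∑ j ∈ Finset.range Q,
            e ((j : ℝ) * (-(c₀ : ℝ) / Q)) * ((χ (t - n) : ℂ) * e ((j : ℝ) * ((n : ℝ) / Q))) := by
      intro n _
      have hsum : ∑ j ∈ Finset.range Q,
          e ((j : ℝ) * (-(c₀ : ℝ) / Q)) * ((χ (t - n) : ℂ) * e ((j : ℝ) * ((n : ℝ) / Q)))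
          = (χ (t - n) : ℂ) * ∑ j ∈ Finset.range Q,
              e ((j : ℝ) * ((((n - (c₀ : ℤ)) : ℤ) : ℝ) / Q)) := by
        rw [Finset.mul_sum]
        refine Finset.sum_congr rfl fun j _ => ?_
        rw [show (j : ℝ) * ((((n - (c₀ : ℤ)) : ℤ) : ℝ) / Q)
            = (j : ℝ) * (-(c₀ : ℝ) / Q) + (j : ℝ) * ((n : ℝ) / Q) by push_cast; ring, e_add]
        ring
      rw [hsum, orth Q hQ (n - c₀)]
      by_cases hd : (Q : ℤ) ∣ (n - (c₀ : ℤ))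
      · rw [if_pos ((hiff n).mpr hd), if_pos hd]
        field_simp
      · rw [if_neg (fun h => hd ((hiff n).mp h)), if_neg hd]
        simp
    rw [Finset.sum_congr rfl step1, ← Finset.mul_sum]
    congr 1
    rw [Finset.sum_comm]
    refine Finset.sum_congr rfl fun j _ => ?_
    exact (Finset.mul_sum _ _ _).symm
  have main_id : ∑ c₀ ∈ 𝒬, ∑ n ∈ S.filter (fun n => n % (Q : ℤ) = (c₀ : ℤ)), (χ (t - n) : ℂ)
      = (1 / (Q : ℂ)) * ∑ j ∈ Finset.range Q, W j * U j := by
    rw [Finset.sum_congr rfl key, ← Finset.mul_sum]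
    congr 1
    rw [Finset.sum_comm]
    refine Finset.sum_congr rfl fun j _ => ?_
    exact (Finset.sum_mul _ _ _).symm
  -- split off j = 0
  have hW0 : W 0 = (𝒬.card : ℂ) := by
    rw [hW]
    simp only
    have h0 : ∀ c₀ ∈ 𝒬, e (((0 : ℕ) : ℝ) * (-(c₀ : ℝ) / Q)) = 1 := by
      intro c₀ _
      norm_num [e_zero]
    rw [Finset.sum_congr rfl h0]
    simp
  have hU0 : U 0 = ∑ n ∈ S, (χ (t - n) : ℂ) := by
    rw [hU]
    simp only
    refine Finset.sum_congr rfl fun n _ => ?_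
    norm_num [e_zero]
  have hsplit : ∑ j ∈ Finset.range Q, W j * U j
      = (𝒬.card : ℂ) * (∑ n ∈ S, (χ (t - n) : ℂ)) + ∑ j ∈ Finset.Ico 1 Q, W j * U j := by
    rw [Finset.range_eq_Ico, Finset.sum_eq_sum_Ico_succ_bot (by omega : 0 < Q), hW0, hU0]
  -- bound on W j for j ≠ 0
  have hWb : ∀ j ∈ Finset.Ico 1 Q, ‖W j‖ ≤ η * 𝒬.card := by
    intro j hj
    rw [Finset.mem_Ico] at hj
    obtain ⟨hj1, hjQ⟩ := hj
    set g := Nat.gcd j Q with hg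
    have hg0 : 0 < g := Nat.gcd_pos_of_pos_left _ (by omega)
    have hgj : g ∣ j := Nat.gcd_dvd_left _ _
    have hgQ : g ∣ Q := Nat.gcd_dvd_right _ _
    have hgltQ : g < Q := lt_of_le_of_lt (Nat.le_of_dvd (by omega) hgj) hjQ
    set q := Q / g with hq
    have hqQ : q ∣ Q := Nat.div_dvd_of_dvd hgQ
    have hqg : q * g = Q := Nat.div_mul_cancel hgQ
    have hq1 : 1 < q := by
      by_contra h
      push_neg at h
      interval_cases q
      · omega
      · omega
    set a : ℤ := -((j / g : ℕ) : ℤ) with ha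
    have hcop : Int.gcd a q = 1 := by
      rw [ha]
      have h1 : Int.gcd (-((j / g : ℕ) : ℤ)) ((q : ℕ) : ℤ) = Nat.gcd (j / g) q := by
        show Nat.gcd (Int.natAbs (-((j / g : ℕ) : ℤ))) (Int.natAbs ((q : ℕ) : ℤ)) = _
        rw [Int.natAbs_neg, Int.natAbs_natCast, Int.natAbs_natCast]
      rw [h1, hq, hg]
      exact Nat.coprime_div_gcd_div_gcd hg0
    have harg : ∀ c₀ : ℕ, (a : ℝ) * (c₀ : ℝ) / (q : ℝ) = (j : ℝ) * (-(c₀ : ℝ) / Q) := by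
      intro c₀
      rw [ha]
      have hgR : (g : ℝ) ≠ 0 := by positivity
      have h1 : ((j / g : ℕ) : ℝ) = (j : ℝ) / g := Nat.cast_div hgj hgR
      have h2 : ((q : ℕ) : ℝ) = (Q : ℝ) / g := by rw [hq]; exact Nat.cast_div hgQ hgR
      rw [Int.cast_neg, Int.cast_natCast, h1]
      push_cast [h2]
      have hQgR : (Q : ℝ) / g ≠ 0 := by positivity
      field_simp
    have heq : W j = ∑ c₀ ∈ 𝒬, e ((a : ℝ) * (c₀ : ℝ) / (q : ℝ)) := by
      rw [hW]
      exact Finset.sum_congr rfl fun c₀ _ => by rw [harg c₀]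
    rw [heq]
    exact hexp q hqQ hq1 a hcop
  -- bound on U j
  have hUb : ∀ j : ℕ, ‖U j‖
      ≤ (M : ℝ) * ∑ i, ‖∑ n ∈ S, e ((-α i + (j : ℝ) / Q) * (n : ℝ))‖ := by
    intro j
    have hUeq : U j = ∑ i, (b i * e (α i * (t : ℝ)))
        * ∑ n ∈ S, e ((-α i + (j : ℝ) / Q) * (n : ℝ)) := by
      rw [hU]
      simp only
      calc ∑ n ∈ S, (χ (t - n) : ℂ) * e ((j : ℝ) * ((n : ℝ) / Q))
          = ∑ n ∈ S, ∑ i, (b i * e (α i * (((t - n : ℤ)) : ℝ))) * e ((j : ℝ) * ((n : ℝ) / Q)) := by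
            refine Finset.sum_congr rfl fun n _ => ?_
            rw [hχ (t - n), Finset.sum_mul]
        _ = ∑ i, ∑ n ∈ S, (b i * e (α i * (((t - n : ℤ)) : ℝ))) * e ((j : ℝ) * ((n : ℝ) / Q)) :=
            Finset.sum_comm
        _ = ∑ i, (b i * e (α i * (t : ℝ))) * ∑ n ∈ S, e ((-α i + (j : ℝ) / Q) * (n : ℝ)) := by
            refine Finset.sum_congr rfl fun i _ => ?_
            rw [Finset.mul_sum]
            refine Finset.sum_congr rfl fun n _ => ?_
            rw [show α i * (((t - n : ℤ)) : ℝ) = α i * (t : ℝ) + (-(α i) * (n : ℝ)) by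
                push_cast; ring, e_add,
              show (-α i + (j : ℝ) / Q) * (n : ℝ) = -(α i) * (n : ℝ) + (j : ℝ) * ((n : ℝ) / Q) by
                ring, e_add]
            ring
    rw [hUeq]
    calc ‖∑ i, (b i * e (α i * (t : ℝ))) * ∑ n ∈ S, e ((-α i + (j : ℝ) / Q) * (n : ℝ))‖
        ≤ ∑ i, ‖(b i * e (α i * (t : ℝ))) * ∑ n ∈ S, e ((-α i + (j : ℝ) / Q) * (n : ℝ))‖ :=
          norm_sum_le _ _
      _ ≤ ∑ i, (M : ℝ) * ‖∑ n ∈ S, e ((-α i + (j : ℝ) / Q) * (n : ℝ))‖ := by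
          refine Finset.sum_le_sum fun i _ => ?_
          rw [norm_mul, norm_mul, e_norm, mul_one]
          exact mul_le_mul_of_nonneg_right (hb i) (norm_nonneg _)
      _ = (M : ℝ) * ∑ i, ‖∑ n ∈ S, e ((-α i + (j : ℝ) / Q) * (n : ℝ))‖ :=
          (Finset.mul_sum _ _ _).symm
  have hTb : ∀ i : Fin M,
      ∑ j ∈ Finset.range Q, ‖∑ n ∈ S, e ((-α i + (j : ℝ) / Q) * (n : ℝ))‖ ≤ 3 * (N : ℝ) :=
    fun i => geo_total Q N hQ hN (-α i)
  -- bound the error term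
  have hRb : ‖∑ j ∈ Finset.Ico 1 Q, W j * U j‖
      ≤ η * 𝒬.card * ((M : ℝ) * ((M : ℝ) * (3 * N))) := by
    calc ‖∑ j ∈ Finset.Ico 1 Q, W j * U j‖
        ≤ ∑ j ∈ Finset.Ico 1 Q, ‖W j * U j‖ := norm_sum_le _ _
      _ ≤ ∑ j ∈ Finset.Ico 1 Q, (η * 𝒬.card)
            * ((M : ℝ) * ∑ i, ‖∑ n ∈ S, e ((-α i + (j : ℝ) / Q) * (n : ℝ))‖) := by
          refine Finset.sum_le_sum fun j hj => ?_
          rw [norm_mul]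
          have hW0' : (0:ℝ) ≤ ‖W j‖ := norm_nonneg _
          have hU0' : (0:ℝ) ≤ ‖U j‖ := norm_nonneg _
          have h1 := hWb j hj
          have h2 := hUb j
          have h3 : (0:ℝ) ≤ η * 𝒬.card := by positivity
          nlinarith
      _ = (η * 𝒬.card) * ((M : ℝ)
            * ∑ j ∈ Finset.Ico 1 Q, ∑ i, ‖∑ n ∈ S, e ((-α i + (j : ℝ) / Q) * (n : ℝ))‖) := by
          rw [← Finset.mul_sum]
          congr 1
          rw [← Finset.mul_sum]
      _ ≤ η * 𝒬.card * ((M : ℝ) * ((M : ℝ) * (3 * N))) := by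
          have hs : ∑ j ∈ Finset.Ico 1 Q, ∑ i, ‖∑ n ∈ S, e ((-α i + (j : ℝ) / Q) * (n : ℝ))‖
              ≤ (M : ℝ) * (3 * N) := by
            rw [Finset.sum_comm]
            calc ∑ i : Fin M, ∑ j ∈ Finset.Ico 1 Q, ‖∑ n ∈ S, e ((-α i + (j : ℝ) / Q) * (n : ℝ))‖
                ≤ ∑ i : Fin M, ∑ j ∈ Finset.range Q,
                    ‖∑ n ∈ S, e ((-α i + (j : ℝ) / Q) * (n : ℝ))‖ := by
                  refine Finset.sum_le_sum fun i _ => ?_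
                  refine Finset.sum_le_sum_of_subset_of_nonneg ?_ (fun _ _ _ => norm_nonneg _)
                  rw [Finset.range_eq_Ico]
                  exact Finset.Ico_subset_Ico (by omega) le_rfl
              _ ≤ ∑ _i : Fin M, 3 * (N : ℝ) := Finset.sum_le_sum fun i _ => hTb i
              _ = (M : ℝ) * (3 * N) := by
                  rw [Finset.sum_const, Finset.card_univ, Fintype.card_fin, nsmul_eq_mul]
          have h4 : (0:ℝ) ≤ η * 𝒬.card := by positivity
          have h5 : (0:ℝ) ≤ (M:ℝ) := by positivity
          exact mul_le_mul_of_nonneg_left (mul_le_mul_of_nonneg_left hs h5) h4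
  -- cast identity
  have hfinal : ((((Q : ℝ) / 𝒬.card) * (∑ c₀ ∈ 𝒬,
        ∑ n ∈ S.filter (fun n => n % (Q : ℤ) = (c₀ : ℤ)), χ (t - n))
        - ∑ n ∈ S, χ (t - n) : ℝ) : ℂ)
      = ((𝒬.card : ℕ) : ℂ)⁻¹ * ∑ j ∈ Finset.Ico 1 Q, W j * U j := by
    push_cast
    rw [main_id, hsplit]
    field_simp
    ring
  have habs : |((Q : ℝ) / 𝒬.card) * (∑ c₀ ∈ 𝒬,
        ∑ n ∈ S.filter (fun n => n % (Q : ℤ) = (c₀ : ℤ)), χ (t - n))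
        - ∑ n ∈ S, χ (t - n)| ≤ 3 * (η * (M : ℝ)^2 * N) := by
    calc |((Q : ℝ) / 𝒬.card) * (∑ c₀ ∈ 𝒬,
          ∑ n ∈ S.filter (fun n => n % (Q : ℤ) = (c₀ : ℤ)), χ (t - n)) - ∑ n ∈ S, χ (t - n)|
        = ‖(((((Q : ℝ) / 𝒬.card) * (∑ c₀ ∈ 𝒬,
            ∑ n ∈ S.filter (fun n => n % (Q : ℤ) = (c₀ : ℤ)), χ (t - n))
            - ∑ n ∈ S, χ (t - n) : ℝ)) : ℂ)‖ := by
          rw [Complex.norm_real, Real.norm_eq_abs]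
      _ = ‖((𝒬.card : ℕ) : ℂ)⁻¹ * ∑ j ∈ Finset.Ico 1 Q, W j * U j‖ := by rw [hfinal]
      _ = ((𝒬.card : ℝ))⁻¹ * ‖∑ j ∈ Finset.Ico 1 Q, W j * U j‖ := by
          rw [norm_mul, norm_inv]
          simp
      _ ≤ ((𝒬.card : ℝ))⁻¹ * (η * 𝒬.card * ((M : ℝ) * ((M : ℝ) * (3 * N)))) := by
          exact mul_le_mul_of_nonneg_left hRb (by positivity)
      _ = 3 * (η * (M : ℝ)^2 * N) := by field_simp
  have hrpow : (0 : ℝ) ≤ (Q : ℝ) * (M : ℝ)^2 * (N : ℝ) ^ ((1:ℝ)/2) := by positivity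
  have hboth := abs_le.mp habs
  linarith [hboth.1]
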